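/- Consider the eight closed spherical caps on S^3 ⊂ E^4 of radius π/4 centered at the points (±1/√2, ±1/√2, 0, 0) and (0, 0, ±1/√2, ±1/√2). If C(o, r) is a closed spherical cap (o ∈ S^3, r ∈ (0, π/2)) whose interior is disjoint from the interior of each of these eight caps, then r ≤ π/12. -/

import Mathlib

/-!
If the open caps `C(o, r)` and `C(c, ρ)` are disjoint then the angle between `o` and `c` is at
least `r + ρ`, since otherwise a point of the great-circle arc from `o` to `c` lies in both; that
is, `⟪o, c⟫ ≤ cos (r + ρ)`. Against the four centres `(±e₀ ± e₁)/√2` this gives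
`|o₀| + |o₁| ≤ √2 cos (r + π/4)`, and likewise for `o₂, o₃`. Squaring and adding,
`1 = ‖o‖² ≤ 4 cos² (r + π/4)`, so `cos (r + π/4) ≥ 1/2 = cos (π/3)` and `r ≤ π/12`.
-/

open scoped RealInnerProductSpace

/-- The point `(s/√2, t/√2, 0, 0)`-style center: `(1/√2)(s eᵢ + t eⱼ)` in `E⁴`. -/
noncomputable def twoTangentCenter (i j : Fin 4) (s t : ℝ) : EuclideanSpace ℝ (Fin 4) :=
  (Real.sqrt 2)⁻¹ •
    (s • EuclideanSpace.single i (1 : ℝ) + t • EuclideanSpace.single j (1 : ℝ))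

open Real

section SphericalCap

variable {E : Type*} [NormedAddCommGroup E] [InnerProductSpace ℝ E]

def capInterior (o : E) (r : ℝ) : Set E := {x | ‖x‖ = 1 ∧ cos r < ⟪x, o⟫}

theorem exists_norm_eq_one_inner_eq_cos {o c : E} (ho : ‖o‖ = 1) (hc : ‖c‖ = 1) {θ : ℝ}
    (hθ : ⟪o, c⟫ = cos θ) (hsin : sin θ ≠ 0) (α : ℝ) :
    ∃ x : E, ‖x‖ = 1 ∧ ⟪x, o⟫ = cos α ∧ ⟪x, c⟫ = cos (θ - α) := by
  -- spherical linear interpolation: the point at arc length `α` from `o` towards `c`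
  set x : E := (sin θ)⁻¹ • (sin (θ - α) • o + sin α • c)
  have hxo : ⟪x, o⟫ = cos α := by
    simp only [x, real_inner_smul_left, inner_add_left, real_inner_self_eq_norm_sq, ho,
      real_inner_comm o c ▸ hθ]
    field_simp
    rw [sin_sub]
    ring
  have hxc : ⟪x, c⟫ = cos (θ - α) := by
    simp only [x, real_inner_smul_left, inner_add_left, real_inner_self_eq_norm_sq, hc, hθ]
    field_simp
    rw [sin_sub, cos_sub]
    linear_combination (-sin α) * sin_sq_add_cos_sq θ
  refine ⟨x, ?_, hxo, hxc⟩
  have hxx : ‖x‖ ^ 2 = 1 :=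
    calc ‖x‖ ^ 2 = ⟪x, (sin θ)⁻¹ • (sin (θ - α) • o + sin α • c)⟫ :=
          (real_inner_self_eq_norm_sq x).symm
      _ = (sin θ)⁻¹ * (sin (θ - α) * cos α + sin α * cos (θ - α)) := by
          rw [real_inner_smul_right, inner_add_right, real_inner_smul_right,
            real_inner_smul_right, hxo, hxc]
      _ = 1 := by rw [mul_comm (sin α), ← sin_add, sub_add_cancel, inv_mul_cancel₀ hsin]
  exact (pow_eq_one_iff_of_nonneg (norm_nonneg x) two_ne_zero).mp hxx

theorem inner_le_cos_add_of_disjoint_capInterior {o c : E} (ho : ‖o‖ = 1) (hc : ‖c‖ = 1)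
    {r ρ : ℝ} (hr : 0 < r) (hρ : 0 < ρ) (hrρ : r + ρ ≤ π)
    (h : Disjoint (capInterior o r) (capInterior c ρ)) : ⟪o, c⟫ ≤ cos (r + ρ) := by
  by_contra! hlt
  set θ := arccos ⟪o, c⟫
  have hle : ⟪o, c⟫ ≤ 1 := by simpa [ho, hc] using real_inner_le_norm o c
  have hcos : cos θ = ⟪o, c⟫ := cos_arccos ((neg_one_le_cos _).trans hlt.le) hle
  have hθ : θ < r + ρ := by
    by_contra! hθ
    exact hlt.not_ge (hcos ▸ cos_le_cos_of_nonneg_of_le_pi (by positivity) (arccos_le_pi _) hθ)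
  have cos_lt_one {φ : ℝ} (hφ : 0 < φ) (hφπ : φ ≤ π) : cos φ < 1 := by
    simpa using cos_lt_cos_of_nonneg_of_le_pi le_rfl hφπ hφ
  rcases (show 0 ≤ θ from arccos_nonneg _).eq_or_lt with hθ0 | hθ0
  · refine Set.disjoint_left.mp h ⟨ho, ?_⟩ ⟨ho, ?_⟩
    · rw [real_inner_self_eq_norm_sq, ho, one_pow]
      exact cos_lt_one hr (by linarith)
    · rw [← hcos, ← hθ0, cos_zero]
      exact cos_lt_one hρ (by linarith)
  · obtain ⟨α, ⟨hα0, hθα⟩, ⟨hαr, hαθ⟩⟩ :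
        ∃ α, (0 < α ∧ θ - ρ < α) ∧ (α < r ∧ α < θ + ρ) := by
      simpa only [max_lt_iff, lt_min_iff] using
        exists_between (max_lt (lt_min hr (by linarith)) (lt_min (by linarith) (by linarith)) :
          max 0 (θ - ρ) < min r (θ + ρ))
    obtain ⟨x, hx, hxo, hxc⟩ := exists_norm_eq_one_inner_eq_cos ho hc hcos.symm
      (sin_pos_of_pos_of_lt_pi hθ0 (by linarith)).ne' α
    refine Set.disjoint_left.mp h ⟨hx, ?_⟩ ⟨hx, ?_⟩
    · rw [hxo]
      exact cos_lt_cos_of_nonneg_of_le_pi hα0.le (by linarith) hαr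
    · rw [hxc, ← cos_abs (θ - α)]
      exact cos_lt_cos_of_nonneg_of_le_pi (abs_nonneg _) (by linarith)
        (abs_lt.mpr ⟨by linarith, by linarith⟩)

end SphericalCap

theorem abs_add_abs_le_of_forall_signs {a b K : ℝ}
    (h : ∀ s t : ℝ, (s = 1 ∨ s = -1) → (t = 1 ∨ t = -1) → s * a + t * b ≤ K) :
    |a| + |b| ≤ K := by
  have := h 1 1 (.inl rfl) (.inl rfl)
  have := h 1 (-1) (.inl rfl) (.inr rfl)
  have := h (-1) 1 (.inr rfl) (.inl rfl)
  have := h (-1) (-1) (.inr rfl) (.inr rfl)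
  cases abs_cases a <;> cases abs_cases b <;> linarith

theorem sq_add_sq_le_of_abs_add_abs_le {a b M : ℝ} (h : |a| + |b| ≤ M) :
    a ^ 2 + b ^ 2 ≤ M ^ 2 :=
  calc a ^ 2 + b ^ 2 ≤ (|a| + |b|) ^ 2 := by
        nlinarith [sq_abs a, sq_abs b, mul_nonneg (abs_nonneg a) (abs_nonneg b)]
    _ ≤ M ^ 2 := pow_le_pow_left₀ (by positivity) h 2

theorem inner_twoTangentCenter (o : EuclideanSpace ℝ (Fin 4)) (i j : Fin 4) (s t : ℝ) :
    ⟪o, twoTangentCenter i j s t⟫ = (s * o i + t * o j) / √2 := by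
  simp [twoTangentCenter, inner_add_right, inner_smul_right, EuclideanSpace.inner_single_right]
  ring

theorem norm_twoTangentCenter {i j : Fin 4} (hij : i ≠ j) {s t : ℝ} (hs : s = 1 ∨ s = -1)
    (ht : t = 1 ∨ t = -1) : ‖twoTangentCenter i j s t‖ = 1 := by
  have hsq : ‖twoTangentCenter i j s t‖ ^ 2 = 1 := by
    rw [← real_inner_self_eq_norm_sq, inner_twoTangentCenter]
    simp [twoTangentCenter, hij, hij.symm]
    rcases hs with rfl | rfl <;> rcases ht with rfl | rfl <;> field_simp <;> norm_num
  exact (pow_eq_one_iff_of_nonneg (norm_nonneg _) two_ne_zero).mp hsq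

theorem abs_add_abs_le_of_disjoint_twoTangentCaps {o : EuclideanSpace ℝ (Fin 4)}
    (ho : ‖o‖ = 1) {r : ℝ} (hr₀ : 0 < r) (hr₁ : r ≤ 3 * π / 4) {i j : Fin 4}
    (hij : i ≠ j)
    (h : ∀ s t : ℝ, (s = 1 ∨ s = -1) → (t = 1 ∨ t = -1) →
      Disjoint (capInterior o r) (capInterior (twoTangentCenter i j s t) (π / 4))) :
    |o i| + |o j| ≤ √2 * cos (r + π / 4) := by
  refine abs_add_abs_le_of_forall_signs fun s t hs ht => ?_
  have := inner_le_cos_add_of_disjoint_capInterior ho (norm_twoTangentCenter hij hs ht) hr₀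
    (by positivity) (by linarith) (h s t hs ht)
  rw [inner_twoTangentCenter, div_le_iff₀ (by positivity)] at this
  linarith

/-- If a closed spherical cap `C(o, r)` on `S³ ⊂ E⁴` has interior disjoint
from the interiors of the eight caps of radius `π/4` centered at `(±1/√2, ±1/√2, 0, 0)` and
`(0, 0, ±1/√2, ±1/√2)`, then `r ≤ π/12`. -/
theorem cap_packing_with_eight_twoTangent_caps (o : EuclideanSpace ℝ (Fin 4)) (r : ℝ)
    (ho : ‖o‖ = 1) (hr : r ∈ Set.Ioo 0 (Real.pi / 2))
    (hdisj : ∀ s t : ℝ, (s = 1 ∨ s = -1) → (t = 1 ∨ t = -1) →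
      Disjoint
        {x : EuclideanSpace ℝ (Fin 4) | ‖x‖ = 1 ∧ Real.cos r < ⟪x, o⟫}
        {x : EuclideanSpace ℝ (Fin 4) |
          ‖x‖ = 1 ∧ Real.cos (Real.pi / 4) < ⟪x, twoTangentCenter 0 1 s t⟫} ∧
      Disjoint
        {x : EuclideanSpace ℝ (Fin 4) | ‖x‖ = 1 ∧ Real.cos r < ⟪x, o⟫}
        {x : EuclideanSpace ℝ (Fin 4) |
          ‖x‖ = 1 ∧ Real.cos (Real.pi / 4) < ⟪x, twoTangentCenter 2 3 s t⟫}) :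
    r ≤ Real.pi / 12 := by
  obtain ⟨hr₀, hr₁⟩ := hr
  have hr₁' : r ≤ 3 * π / 4 := by linarith [pi_pos]
  have h01 := abs_add_abs_le_of_disjoint_twoTangentCaps ho hr₀ hr₁'
    (by decide : (0 : Fin 4) ≠ 1) fun s t hs ht => (hdisj s t hs ht).1
  have h23 := abs_add_abs_le_of_disjoint_twoTangentCaps ho hr₀ hr₁'
    (by decide : (2 : Fin 4) ≠ 3) fun s t hs ht => (hdisj s t hs ht).2
  have hsum : o 0 ^ 2 + o 1 ^ 2 + o 2 ^ 2 + o 3 ^ 2 = 1 := by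
    simpa [ho, Fin.sum_univ_four, add_assoc] using (EuclideanSpace.real_norm_sq_eq o).symm
  have hK0 : 0 ≤ cos (r + π / 4) :=
    nonneg_of_mul_nonneg_right ((add_nonneg (abs_nonneg _) (abs_nonneg _)).trans h01)
      (by positivity)
  have hsq : 1 ≤ 4 * cos (r + π / 4) ^ 2 := by
    have h2 : √2 ^ 2 = 2 := sq_sqrt zero_le_two
    nlinarith [sq_add_sq_le_of_abs_add_abs_le h01, sq_add_sq_le_of_abs_add_abs_le h23]
  have hK : cos (π / 3) ≤ cos (r + π / 4) := by rw [cos_pi_div_three]; nlinarith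
  have := (strictAntiOn_cos.le_iff_ge ⟨by positivity, by linarith [pi_pos]⟩
    ⟨by positivity, by linarith⟩).mp hK
  linarith
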